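/- (Rejection soundness of validatorOf.) For every program p : Prog and every trace t : List (ℤ × ℤ), if the server serverOf p produces trace t from its initial state s₀ := (fun _ => 0) (i.e., there exists a final memory s' such that the server produces t from s₀ to s'), then the validator validatorOf p accepts t (i.e., there exists a final validator state v' such that the validator consumes t from its initial state v₀ := {((fun _ => 0), {var 0 = const 0})} to v'). -/
import Mathlib


/-- Variables are natural numbers. -/
abbrev Var := ℕ

/-- Binary integer operations: +, −, ×, ÷ (integer division). -/
inductive Op
  | add | sub | mul | div
deriving DecidableEq

def Op.denote : Op → ℤ → ℤ → ℤ
  | .add => (· + ·)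
  | .sub => (· - ·)
  | .mul => (· * ·)
  | .div => (· / ·)

/-- Symbolic server expressions. -/
inductive SExp
  | const : ℤ → SExp
  | read : ℕ → SExp
  | bin : Op → SExp → SExp → SExp
deriving DecidableEq

/-- Evaluation of a server expression on a memory `s : ℕ → ℤ`, written `e^s`. -/
def SExp.eval (s : ℕ → ℤ) : SExp → ℤ
  | .const z => z
  | .read k => s k
  | .bin op e₁ e₂ => op.denote (e₁.eval s) (e₂.eval s)

/-- Validator expressions. -/
inductive VExp
  | const : ℤ → VExp
  | var : Var → VExp
  | bin : Op → VExp → VExp → VExp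
deriving DecidableEq

/-- Evaluation of a validator expression under an assignment, written `e^asgn`. -/
def VExp.eval (asgn : Var → ℤ) : VExp → ℤ
  | .const z => z
  | .var x => asgn x
  | .bin op e₁ e₂ => op.denote (e₁.eval asgn) (e₂.eval asgn)

/-- Symbolization `e^vs` of a server expression: replace every `read src` by `var (vs src)`. -/
def SExp.symb (vs : ℕ → Var) : SExp → VExp
  | .const z => .const z
  | .read k => .var (vs k)
  | .bin op e₁ e₂ => .bin op (e₁.symb vs) (e₂.symb vs)

/-- Comparison operators for constraints: <, ≤, =. -/
inductive Cmp
  | lt | le | eq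
deriving DecidableEq

def Cmp.holds : Cmp → ℤ → ℤ → Prop
  | .lt => (· < ·)
  | .le => (· ≤ ·)
  | .eq => (· = ·)

/-- A constraint is a triple of two validator expressions and a comparison. -/
structure Constraint where
  lhs : VExp
  cmp : Cmp
  rhs : VExp
deriving DecidableEq

/-- `asgn` satisfies the constraint set `cs`. -/
def Sat (asgn : Var → ℤ) (cs : Finset Constraint) : Prop :=
  ∀ c ∈ cs, c.cmp.holds (c.lhs.eval asgn) (c.rhs.eval asgn)

/-- A variable occurs in a validator expression. -/
def VExp.occurs (x : Var) : VExp → Prop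
  | .const _ => False
  | .var y => y = x
  | .bin _ e₁ e₂ => e₁.occurs x ∨ e₂.occurs x

/-- `x` is fresh for the constraint set `cs`: it occurs in no constraint of `cs`. -/
def FreshCs (x : Var) (cs : Finset Constraint) : Prop :=
  ∀ c ∈ cs, ¬ c.lhs.occurs x ∧ ¬ c.rhs.occurs x

/-- `x` is fresh for `vs : ℕ → Var`. -/
def FreshVs (x : Var) (vs : ℕ → Var) : Prop :=
  ∀ k : ℕ, vs k ≠ x

/-- One more than the largest variable occurring in a validator expression
(a strict upper bound on its variables). -/
def VExp.maxVar : VExp → ℕ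
  | .const _ => 0
  | .var x => x + 1
  | .bin _ e₁ e₂ => max e₁.maxVar e₂.maxVar

def Constraint.maxVar (c : Constraint) : ℕ :=
  max c.lhs.maxVar c.rhs.maxVar

/-- A validation state: a map from addresses to their representing variables
(with finite support, so that fresh variables exist), and a finite set of
constraints. -/
abbrev VState := (ℕ →₀ ℕ) × Finset Constraint

/-- A fixed variable fresh for both `vs` and `cs`. -/
def freshVar (vs : ℕ →₀ ℕ) (cs : Finset Constraint) : Var :=
  max (vs.support.sup ⇑vs) (cs.sup Constraint.maxVar) + 1

/-- The write rule on validation states. -/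
noncomputable def writeV (d : ℕ) (e : SExp) (w : VState) : VState :=
  let x := freshVar w.1 w.2
  (w.1.update d x, insert ⟨VExp.var x, Cmp.eq, e.symb w.1⟩ w.2)

/-- The havoc rule on validation states. -/
noncomputable def havocV (d : ℕ) (w : VState) : VState :=
  (w.1.update d (freshVar w.1 w.2), w.2)

/-- Programs in the `Prog` language. -/
inductive Prog
  | ret
  | write (dst : ℕ) (e : SExp) (p : Prog)
  | branch (e₁ e₂ : SExp) (p₁ p₂ : Prog)

/-- Semantics of `Prog` on integer memories. -/
def evalProg : Prog → (ℕ → ℤ) → (ℕ → ℤ)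
  | .ret, s => s
  | .write d e p, s => evalProg p (Function.update s d (e.eval s))
  | .branch e₁ e₂ p₁ p₂, s =>
      if e₁.eval s ≤ e₂.eval s then evalProg p₁ s else evalProg p₂ s

/-- The symbolic executor on validation states. -/
noncomputable def exec : Prog → VState → Finset VState
  | .ret, w => {w}
  | .write d e p, w => exec p (writeV d e w)
  | .branch e₁ e₂ p₁ p₂, w =>
      exec p₁ (w.1, insert ⟨e₁.symb w.1, Cmp.le, e₂.symb w.1⟩ w.2) ∪
      exec p₂ (w.1, insert ⟨e₂.symb w.1, Cmp.lt, e₁.symb w.1⟩ w.2)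

/-- A constraint set is solvable iff some assignment satisfies it. -/
def Solvable (cs : Finset Constraint) : Prop :=
  ∃ asgn : Var → ℤ, Sat asgn cs

/-- The step function of the server derived from program `p`:
write the choice to address 0 and the query to address 1, run `p`,
and answer with the value at address 1. -/
def sstepP (p : Prog) (q c : ℤ) (s : ℕ → ℤ) : ℤ × (ℕ → ℤ) :=
  let s₃ := evalProg p (Function.update (Function.update s 0 c) 1 q)
  (s₃ 1, s₃)

open Classical in
/-- The step function of the validator derived from program `p`. -/
noncomputable def vstepP (p : Prog) (q a : ℤ) (v : Finset VState) :
    Option (Finset VState) :=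
  let v' : Finset VState := v.biUnion (fun w =>
    let w₂ := writeV 1 (SExp.const q) (havocV 0 w)
    (exec p w₂).biUnion (fun w₃ =>
      let cs₄ := insert ⟨VExp.var (w₃.1 1), Cmp.eq, VExp.const a⟩ w₃.2
      if Solvable cs₄ then {(w₃.1, cs₄)} else ∅))
  if v' = ∅ then none else some v'

/-- The server `serverOf p` produces trace `t` from memory `s` to memory `s'`. -/
inductive ProducesP (p : Prog) : (ℕ → ℤ) → List (ℤ × ℤ) → (ℕ → ℤ) → Prop
  | nil (s : ℕ → ℤ) : ProducesP p s [] s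
  | snoc {s s₁ s₂ : ℕ → ℤ} {t : List (ℤ × ℤ)} {q a : ℤ} (c : ℤ)
      (h : ProducesP p s t s₁) (hs : sstepP p q c s₁ = (a, s₂)) :
      ProducesP p s (t ++ [(q, a)]) s₂

/-- The validator `validatorOf p` consumes trace `t` from state `v` to state `v'`. -/
inductive ConsumesP (p : Prog) : Finset VState → List (ℤ × ℤ) → Finset VState → Prop
  | nil (v : Finset VState) : ConsumesP p v [] v
  | snoc {v v₁ v₂ : Finset VState} {t : List (ℤ × ℤ)} {q a : ℤ}
      (h : ConsumesP p v t v₁) (hv : vstepP p q a v₁ = some v₂) :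
      ConsumesP p v (t ++ [(q, a)]) v₂

/-- Initial server state: all addresses hold 0. -/
def initMem : ℕ → ℤ := fun _ => 0

/-- Initial validator state: all addresses map to variable 0, constrained to be 0. -/
def initVal : Finset VState :=
  {((0 : ℕ →₀ ℕ), ({⟨VExp.var 0, Cmp.eq, VExp.const 0⟩} : Finset Constraint))}

lemma vExp_eval_update (e : VExp) (asgn : Var → ℤ) (x : Var) (z : ℤ) (h : e.maxVar ≤ x) :
    e.eval (Function.update asgn x z) = e.eval asgn := by
  induction e with
  | const => rfl
  | var y =>
      simp only [VExp.maxVar] at h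
      have hyx : y ≠ x := Nat.ne_of_lt h
      simp [VExp.eval, Function.update_of_ne hyx]
  | bin op e₁ e₂ ih₁ ih₂ =>
      simp only [VExp.maxVar, max_le_iff] at h
      simp [VExp.eval, ih₁ h.1, ih₂ h.2]

lemma symb_eval (e : SExp) (vs : ℕ → Var) (asgn : Var → ℤ) (s : ℕ → ℤ)
    (hA : ∀ k, asgn (vs k) = s k) : (e.symb vs).eval asgn = e.eval s := by
  induction e with
  | const => rfl
  | read k => simpa [SExp.symb, VExp.eval, SExp.eval] using hA k
  | bin op e₁ e₂ ih₁ ih₂ => simp [SExp.symb, VExp.eval, SExp.eval, ih₁, ih₂]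

lemma freshVar_vs (vs : ℕ →₀ ℕ) (cs : Finset Constraint) (k : ℕ) :
    vs k ≠ freshVar vs cs := by
  by_cases hk : k ∈ vs.support
  · have := Finset.le_sup (f := ⇑vs) hk
    unfold freshVar; omega
  · rw [Finsupp.notMem_support_iff.mp hk]; unfold freshVar; omega

lemma freshVar_cs (vs : ℕ →₀ ℕ) (cs : Finset Constraint) {c : Constraint} (hc : c ∈ cs) :
    c.maxVar ≤ freshVar vs cs := by
  have := Finset.le_sup (f := Constraint.maxVar) hc
  unfold freshVar; omega

lemma sat_update (asgn : Var → ℤ) (cs : Finset Constraint) (vs : ℕ →₀ ℕ) (z : ℤ)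
    (h : Sat asgn cs) : Sat (Function.update asgn (freshVar vs cs) z) cs := by
  intro c hc
  have hm := freshVar_cs vs cs hc
  have h1 : c.lhs.maxVar ≤ freshVar vs cs :=
    le_trans (le_max_left _ _) hm
  have h2 : c.rhs.maxVar ≤ freshVar vs cs :=
    le_trans (le_max_right _ _) hm
  rw [vExp_eval_update _ _ _ _ h1, vExp_eval_update _ _ _ _ h2]
  exact h c hc

lemma writeV_sound (d : ℕ) (e : SExp) (w : VState) (s : ℕ → ℤ) (asgn : Var → ℤ)
    (hS : Sat asgn w.2) (hA : ∀ k, asgn (w.1 k) = s k) :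
    Sat (Function.update asgn (freshVar w.1 w.2) (e.eval s)) (writeV d e w).2 ∧
    ∀ k, (Function.update asgn (freshVar w.1 w.2) (e.eval s)) ((writeV d e w).1 k)
      = Function.update s d (e.eval s) k := by
  set x := freshVar w.1 w.2 with hx
  set asgn' := Function.update asgn x (e.eval s) with hasgn'
  have hA' : ∀ k, asgn' (w.1 k) = s k := fun k => by
    rw [hasgn', Function.update_of_ne (freshVar_vs _ _ k)]; exact hA k
  constructor
  · intro c hc
    simp only [writeV, Finset.mem_insert] at hc
    rcases hc with rfl | hc
    · show Cmp.holds .eq _ _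
      show asgn' x = (e.symb w.1).eval asgn'
      rw [symb_eval e _ asgn' s hA', hasgn', Function.update_self]
    · exact sat_update asgn w.2 w.1 (e.eval s) hS c hc
  · intro k
    show asgn' ((w.1.update d x) k) = _
    rw [Finsupp.coe_update]
    by_cases hk : k = d
    · subst hk
      rw [Function.update_self, Function.update_self, hasgn', Function.update_self]
    · rw [Function.update_of_ne hk, Function.update_of_ne hk, hA' k]

lemma havocV_sound (d : ℕ) (z : ℤ) (w : VState) (s : ℕ → ℤ) (asgn : Var → ℤ)
    (hS : Sat asgn w.2) (hA : ∀ k, asgn (w.1 k) = s k) :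
    Sat (Function.update asgn (freshVar w.1 w.2) z) (havocV d w).2 ∧
    ∀ k, (Function.update asgn (freshVar w.1 w.2) z) ((havocV d w).1 k)
      = Function.update s d z k := by
  set x := freshVar w.1 w.2 with hx
  set asgn' := Function.update asgn x z with hasgn'
  have hA' : ∀ k, asgn' (w.1 k) = s k := fun k => by
    rw [hasgn', Function.update_of_ne (freshVar_vs _ _ k)]; exact hA k
  refine ⟨sat_update asgn w.2 w.1 z hS, fun k => ?_⟩
  show asgn' ((w.1.update d x) k) = _
  rw [Finsupp.coe_update]
  by_cases hk : k = d
  · subst hk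
    rw [Function.update_self, Function.update_self, hasgn', Function.update_self]
  · rw [Function.update_of_ne hk, Function.update_of_ne hk, hA' k]

lemma exec_sound (p : Prog) : ∀ (w : VState) (s : ℕ → ℤ) (asgn : Var → ℤ),
    Sat asgn w.2 → (∀ k, asgn (w.1 k) = s k) →
    ∃ w' ∈ exec p w, ∃ asgn' : Var → ℤ,
      Sat asgn' w'.2 ∧ ∀ k, asgn' (w'.1 k) = evalProg p s k := by
  induction p with
  | ret =>
      intro w s asgn hS hA
      exact ⟨w, by simp [exec], asgn, hS, hA⟩
  | write d e p ih =>
      intro w s asgn hS hA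
      obtain ⟨h1, h2⟩ := writeV_sound d e w s asgn hS hA
      obtain ⟨w', hw', asgn', hS', hA'⟩ := ih (writeV d e w) _ _ h1 h2
      exact ⟨w', by simpa [exec] using hw', asgn', hS', hA'⟩
  | branch e₁ e₂ p₁ p₂ ih₁ ih₂ =>
      intro w s asgn hS hA
      by_cases hle : e₁.eval s ≤ e₂.eval s
      · have hS' : Sat asgn (insert ⟨e₁.symb w.1, Cmp.le, e₂.symb w.1⟩ w.2) := by
          intro c hc
          rcases Finset.mem_insert.mp hc with rfl | hc
          · show Cmp.holds .le _ _
            show (e₁.symb w.1).eval asgn ≤ (e₂.symb w.1).eval asgn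
            rw [symb_eval _ _ _ _ hA, symb_eval _ _ _ _ hA]; exact hle
          · exact hS c hc
        obtain ⟨w', hw', asgn', hS'', hA'⟩ :=
          ih₁ (w.1, insert ⟨e₁.symb w.1, Cmp.le, e₂.symb w.1⟩ w.2) s asgn hS' hA
        refine ⟨w', ?_, asgn', hS'', by simpa [evalProg, hle] using hA'⟩
        simp only [exec, Finset.mem_union]
        exact Or.inl hw'
      · have hS' : Sat asgn (insert ⟨e₂.symb w.1, Cmp.lt, e₁.symb w.1⟩ w.2) := by
          intro c hc
          rcases Finset.mem_insert.mp hc with rfl | hc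
          · show Cmp.holds .lt _ _
            show (e₂.symb w.1).eval asgn < (e₁.symb w.1).eval asgn
            rw [symb_eval _ _ _ _ hA, symb_eval _ _ _ _ hA]; omega
          · exact hS c hc
        obtain ⟨w', hw', asgn', hS'', hA'⟩ :=
          ih₂ (w.1, insert ⟨e₂.symb w.1, Cmp.lt, e₁.symb w.1⟩ w.2) s asgn hS' hA
        refine ⟨w', ?_, asgn', hS'', by simpa [evalProg, hle] using hA'⟩
        simp only [exec, Finset.mem_union]
        exact Or.inr hw'

lemma vstep_sound (p : Prog) (v : Finset VState) (w : VState) (hw : w ∈ v)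
    (s₁ : ℕ → ℤ) (asgn : Var → ℤ) (hS : Sat asgn w.2) (hA : ∀ k, asgn (w.1 k) = s₁ k)
    (q a c : ℤ) (s₂ : ℕ → ℤ) (hs : sstepP p q c s₁ = (a, s₂)) :
    ∃ v₂, vstepP p q a v = some v₂ ∧ ∃ w' ∈ v₂, ∃ asgn' : Var → ℤ,
      Sat asgn' w'.2 ∧ ∀ k, asgn' (w'.1 k) = s₂ k := by
  obtain ⟨h1, h2⟩ := havocV_sound 0 c w s₁ asgn hS hA
  obtain ⟨h3, h4⟩ := writeV_sound 1 (SExp.const q) (havocV 0 w) _ _ h1 h2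
  obtain ⟨w₃, hw₃, asgn₃, hS₃, hA₃⟩ :=
    exec_sound p (writeV 1 (SExp.const q) (havocV 0 w)) _ _ h3 h4
  simp only [sstepP, Prod.mk.injEq] at hs
  simp only [SExp.eval] at hS₃ hA₃
  obtain ⟨ha, hs₂⟩ := hs
  set cs₄ : Finset Constraint := insert ⟨VExp.var (w₃.1 1), Cmp.eq, VExp.const a⟩ w₃.2
    with hcs₄
  have hSat₄ : Sat asgn₃ cs₄ := by
    intro cst hc
    rcases Finset.mem_insert.mp hc with rfl | hc
    · show Cmp.holds .eq _ _
      show asgn₃ (w₃.1 1) = a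
      rw [hA₃ 1, ha]
    · exact hS₃ cst hc
  have hsolv : Solvable cs₄ := ⟨asgn₃, hSat₄⟩
  classical
  set v' : Finset VState := v.biUnion (fun w =>
    let w₂ := writeV 1 (SExp.const q) (havocV 0 w)
    (exec p w₂).biUnion (fun w₃ =>
      let cs₄ := insert ⟨VExp.var (w₃.1 1), Cmp.eq, VExp.const a⟩ w₃.2
      if Solvable cs₄ then {(w₃.1, cs₄)} else ∅)) with hv'
  have hmem : (w₃.1, cs₄) ∈ v' := by
    rw [hv']
    refine Finset.mem_biUnion.mpr ⟨w, hw, Finset.mem_biUnion.mpr ⟨w₃, hw₃, ?_⟩⟩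
    simp only
    rw [if_pos hsolv]
    exact Finset.mem_singleton_self _
  have hne : v' ≠ ∅ := Finset.ne_empty_of_mem hmem
  refine ⟨v', ?_, (w₃.1, cs₄), hmem, asgn₃, hSat₄, fun k => ?_⟩
  · show vstepP p q a v = some v'
    unfold vstepP
    rw [if_neg hne]
  · rw [hA₃ k, hs₂]

/-- Rejection soundness of `validatorOf p`. -/
theorem validatorOf_sound (p : Prog) (t : List (ℤ × ℤ))
    (h : ∃ s' : ℕ → ℤ, ProducesP p initMem t s') :
    ∃ v' : Finset VState, ConsumesP p initVal t v' := by
  obtain ⟨s', h⟩ := h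
  suffices H : ∃ v, ConsumesP p initVal t v ∧ ∃ w ∈ v, ∃ asgn : Var → ℤ,
      Sat asgn w.2 ∧ ∀ k, asgn (w.1 k) = s' k by
    obtain ⟨v, hv, _⟩ := H
    exact ⟨v, hv⟩
  induction h with
  | nil =>
      refine ⟨initVal, ConsumesP.nil _, ((0 : ℕ →₀ ℕ),
        ({⟨VExp.var 0, Cmp.eq, VExp.const 0⟩} : Finset Constraint)),
        by simp [initVal], fun _ => 0, ?_, fun k => rfl⟩
      intro c hc
      rcases Finset.mem_singleton.mp hc with rfl
      show Cmp.holds .eq _ _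
      rfl
  | snoc c h hs ih =>
      obtain ⟨v, hcons, w, hw, asgn, hS, hA⟩ := ih
      obtain ⟨v₂, hstep, w', hw', asgn', hS', hA'⟩ :=
        vstep_sound p v w hw _ asgn hS hA _ _ c _ hs
      exact ⟨v₂, ConsumesP.snoc hcons hstep, w', hw', asgn', hS', hA'⟩
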